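/- Let q = 2^h, h > p, r ≥ p, and r ≤ m. The minimum Lee distance of the linear code ZRM_{2^h}^p(r,m) equals 2^{m-r+p}; that is, every nonzero codeword has Lee weight at least 2^{m-r+p}, and some nonzero codeword has Lee weight exactly 2^{m-r+p}. -/

import Mathlib

/-!
Write a codeword through its ANF coefficients `c` and let `2^t` be the largest power of two
dividing all of them. Modulo `2^(t+1)` the coefficients describe a nonzero function of degree at
most `r - p + t` (a monomial of order `r - p + i` carries the factor `2^i`), so by the Reed–Muller
bound, proved by the Plotkin `(u | u + v)` induction, it is nonzero at `2^(m - r + p - t)` points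
or more. At each such point the codeword entry is a nonzero multiple of `2^t`, hence has Lee weight
at least `2^t`. The bound is attained by `2^p x_1 ⋯ x_r`.
-/

open Finset

/-- The binary expansion of `i`, as a point of `ℤ₂^m`. -/
def bits (m : ℕ) (i : ℕ) : Fin m → ZMod 2 := fun j => if Nat.testBit i j.val then 1 else 0

/-- Admissibility condition on ANF coefficients for `ZRM_{2^h}^p(r,m)`: monomials of order
at most `r - p` are free, a monomial of order `r - p + i` (for `1 ≤ i ≤ p`) must carry a
coefficient divisible by `2^i`, and monomials of order exceeding `r` do not occur. -/
def zrmCond (h p r m : ℕ) (c : Finset (Fin m) → ZMod (2 ^ h)) : Prop :=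
  ∀ S : Finset (Fin m),
    (r < S.card → c S = 0) ∧
    (r - p < S.card → S.card ≤ r →
      ∃ u : ZMod (2 ^ h), c S = 2 ^ (S.card - (r - p)) * u)

/-- The `ℤ_{2^h}`-valued vector of length `2^m` associated with the generalized Boolean
function with ANF coefficients `c` (monomials indexed by subsets of the variables). -/
def anfVec (h m : ℕ) (c : Finset (Fin m) → ZMod (2 ^ h)) : Fin (2 ^ m) → ZMod (2 ^ h) :=
  fun i => ∑ S : Finset (Fin m), c S * ∏ α ∈ S, ((bits m i.val α).val : ZMod (2 ^ h))

/-- The code `ZRM_{2^h}^p(r,m)` as a set of vectors of length `2^m` over `ℤ_{2^h}`. -/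
def ZRM (h p r m : ℕ) : Set (Fin (2 ^ m) → ZMod (2 ^ h)) :=
  {v | ∃ c : Finset (Fin m) → ZMod (2 ^ h), zrmCond h p r m c ∧ v = anfVec h m c}

/-- Hamming weight: the number of nonzero entries. -/
def wtH {n q : ℕ} (v : Fin n → ZMod q) : ℕ := (Finset.univ.filter fun i => v i ≠ 0).card

/-- Lee weight: `∑ᵢ min(vᵢ, q - vᵢ)` with entries represented in `[0, q)`. -/
def wtL {n q : ℕ} (v : Fin n → ZMod q) : ℕ := ∑ i : Fin n, min (v i).val (q - (v i).val)

section ANF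

variable {σ M : Type*} [AddCommMonoid M]

/-- The value at the point with support `T` of the function with ANF coefficients `g`: there the
monomial `∏_{α ∈ S} x_α` is `1` iff `S ⊆ T`. -/
def anfEval (g : Finset σ → M) (T : Finset σ) : M := ∑ S ∈ T.powerset, g S

open Classical in
lemma card_filter_ne_zero_le_add {ι : Type*} (s : Finset ι) (f g : ι → M) :
    #{i ∈ s | g i ≠ 0} ≤ #{i ∈ s | f i ≠ 0} + #{i ∈ s | f i + g i ≠ 0} := by
  refine (card_le_card fun i hi => ?_).trans (card_union_le _ _)
  simp only [mem_filter, mem_union] at hi ⊢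
  by_cases h0 : f i = 0
  · exact Or.inr ⟨hi.1, by rw [h0, zero_add]; exact hi.2⟩
  · exact Or.inl ⟨hi.1, h0⟩

variable [DecidableEq σ]

lemma anfEval_single (S₀ : Finset σ) (x : M) (T : Finset σ) :
    anfEval (Pi.single S₀ x) T = if S₀ ⊆ T then x else 0 := by
  simp only [anfEval, sum_pi_single', mem_powerset]

lemma anfEval_insert (g : Finset σ → M) {a : σ} {T : Finset σ} (ha : a ∉ T) :
    anfEval g (insert a T) = anfEval g T + anfEval (fun S => g (insert a S)) T :=
  sum_powerset_insert ha g

lemma card_filter_powerset_insert {a : σ} {V : Finset σ} (ha : a ∉ V)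
    (P : Finset σ → Prop) [DecidablePred P] :
    #{T ∈ (insert a V).powerset | P T} =
      #{T ∈ V.powerset | P T} + #{T ∈ V.powerset | P (insert a T)} := by
  simp only [card_filter, sum_powerset_insert ha]

open Classical in
theorem two_pow_le_card_anfEval_ne_zero (V : Finset σ) (d : ℕ) (g : Finset σ → M)
    (hg : ∃ S ⊆ V, g S ≠ 0) (hdeg : ∀ S ⊆ V, d < #S → g S = 0) :
    2 ^ (#V - d) ≤ #{T ∈ V.powerset | anfEval g T ≠ 0} := by
  induction V using Finset.induction_on generalizing d g with
  | empty =>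
    obtain ⟨S, hS, hgS⟩ := hg
    rw [subset_empty] at hS
    subst hS
    simp only [card_empty, Nat.zero_sub, pow_zero]
    exact card_pos.2
      ⟨∅, mem_filter.2 ⟨empty_mem_powerset _, by simpa [anfEval] using hgS⟩⟩
  | insert a V ha ih =>
    set g' : Finset σ → M := fun S => g (insert a S)
    have heval : ∀ T ∈ V.powerset, anfEval g (insert a T) = anfEval g T + anfEval g' T :=
      fun T hT => anfEval_insert g fun haT => ha (mem_powerset.1 hT haT)
    have hdeg' : ∀ S ⊆ V, d < #S + 1 → g' S = 0 := fun S hSV hS =>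
      hdeg _ (insert_subset_insert a hSV) (by rwa [card_insert_of_notMem fun h => ha (hSV h)])
    have hsplit : {T ∈ V.powerset | anfEval g (insert a T) ≠ 0} =
        {T ∈ V.powerset | anfEval g T + anfEval g' T ≠ 0} :=
      filter_congr fun T hT => by rw [heval T hT]
    rw [card_filter_powerset_insert ha, card_insert_of_notMem ha, hsplit]
    by_cases hg' : ∃ S ⊆ V, g' S ≠ 0
    · obtain ⟨S, hSV, hS⟩ := hg'
      have hd : 1 ≤ d := by
        by_contra hd
        exact hS (hdeg' S hSV (by omega))
      calc 2 ^ (#V + 1 - d) = 2 ^ (#V - (d - 1)) := by congr 1; omega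
        _ ≤ #{T ∈ V.powerset | anfEval g' T ≠ 0} :=
          ih (d - 1) g' ⟨S, hSV, hS⟩ fun S hSV hS => hdeg' S hSV (by omega)
        _ ≤ _ := card_filter_ne_zero_le_add _ (anfEval g) (anfEval g')
    · push Not at hg'
      have hgV : ∃ S ⊆ V, g S ≠ 0 := by
        obtain ⟨S, hS, hgS⟩ := hg
        refine ⟨S, fun b hb => ?_, hgS⟩
        have haS : a ∉ S := fun haS => hgS (by
          rw [← insert_erase haS]; exact hg' _ (subset_insert_iff.1 hS))
        exact mem_of_mem_insert_of_ne (hS hb) (by rintro rfl; exact haS hb)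
      have hsame : {T ∈ V.powerset | anfEval g T + anfEval g' T ≠ 0} =
          {T ∈ V.powerset | anfEval g T ≠ 0} := by
        refine filter_congr fun T hT => ?_
        rw [show anfEval g' T = 0 from sum_eq_zero fun S hS =>
          hg' S ((mem_powerset.1 hS).trans (mem_powerset.1 hT)), add_zero]
      have hcount := ih d g hgV fun S hS => hdeg S (hS.trans (subset_insert a V))
      rw [hsame]
      calc 2 ^ (#V + 1 - d) ≤ 2 ^ (#V - d + 1) := Nat.pow_le_pow_right two_pos (by omega)
        _ ≤ _ := by rw [pow_succ]; omega

end ANF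

section Lee

def leeNorm {q : ℕ} (x : ZMod q) : ℕ := min x.val (q - x.val)

@[simp] lemma leeNorm_zero {q : ℕ} : leeNorm (0 : ZMod q) = 0 := by simp [leeNorm]

@[simp] lemma wtL_zero {n q : ℕ} : wtL (0 : Fin n → ZMod q) = 0 := by simp [wtL]

lemma leeNorm_natCast {q k : ℕ} [NeZero q] (hk : 2 * k ≤ q) : leeNorm (k : ZMod q) = k := by
  have hq : 0 < q := Nat.pos_of_neZero q
  rw [leeNorm, ZMod.val_natCast, Nat.mod_eq_of_lt (by omega)]
  exact min_eq_left (by omega)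

lemma le_leeNorm_of_dvd {q d : ℕ} [NeZero q] (hd : d ∣ q) {x : ZMod q} (hdx : (d : ZMod q) ∣ x)
    (hx : x ≠ 0) : d ≤ leeNorm x := by
  have hdval : d ∣ x.val := by
    obtain ⟨y, rfl⟩ := hdx
    rw [ZMod.val_mul, ZMod.val_natCast, Nat.dvd_mod_iff hd]
    exact ((Nat.dvd_mod_iff hd).2 dvd_rfl).mul_right _
  have hpos : 0 < x.val := ZMod.val_pos.2 hx
  have hlt : x.val < q := ZMod.val_lt x
  exact le_min (Nat.le_of_dvd hpos hdval) (Nat.le_of_dvd (by omega) (Nat.dvd_sub hd hdval))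

end Lee

section Bits

def bitSet (m i : ℕ) : Finset (Fin m) := {α | i.testBit α}

lemma bitSet_injective (m : ℕ) : Function.Injective fun i : Fin (2 ^ m) => bitSet m i := by
  intro i j hij
  refine Fin.ext (Nat.eq_of_testBit_eq fun k => ?_)
  by_cases hk : k < m
  · simpa [bitSet] using congrArg (⟨k, hk⟩ ∈ ·) hij
  · have hm : 2 ^ m ≤ 2 ^ k := Nat.pow_le_pow_right two_pos (not_lt.1 hk)
    rw [Nat.testBit_lt_two_pow (i.2.trans_le hm), Nat.testBit_lt_two_pow (j.2.trans_le hm)]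

lemma bitSet_bijective (m : ℕ) : Function.Bijective fun i : Fin (2 ^ m) => bitSet m i :=
  (Fintype.bijective_iff_injective_and_card _).2 ⟨bitSet_injective m, by simp⟩

lemma anfVec_apply {h m : ℕ} (c : Finset (Fin m) → ZMod (2 ^ h)) (i : Fin (2 ^ m)) :
    anfVec h m c i = anfEval c (bitSet m i) := by
  have hmonomial : ∀ S : Finset (Fin m),
      ∏ α ∈ S, ((bits m i α).val : ZMod (2 ^ h)) = if S ⊆ bitSet m i then 1 else 0 := by
    intro S
    calc ∏ α ∈ S, ((bits m i α).val : ZMod (2 ^ h))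
        = ∏ α ∈ S, if α ∈ bitSet m i then 1 else 0 := prod_congr rfl fun α _ => by
          by_cases hb : i.val.testBit α <;>
            simp [bits, bitSet, hb, -ZMod.natCast_val, ZMod.val_one]
      _ = _ := prod_boole
  simp only [anfVec, hmonomial, mul_boole, ← sum_filter, filter_subset_univ, anfEval]

lemma wtL_anfVec {h m : ℕ} (c : Finset (Fin m) → ZMod (2 ^ h)) :
    wtL (anfVec h m c) = ∑ T, leeNorm (anfEval c T) := by
  simp only [wtL, anfVec_apply]
  exact (bitSet_bijective m).sum_comp fun T => leeNorm (anfEval c T)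

end Bits

lemma Nat.exists_lt_and_not_succ {P : ℕ → Prop} (h0 : P 0) :
    ∀ {n : ℕ}, ¬ P n → ∃ t < n, P t ∧ ¬ P (t + 1)
  | 0, hn => absurd h0 hn
  | n + 1, hn => by
    by_cases hPn : P n
    · exact ⟨n, n.lt_succ_self, hPn, hn⟩
    · obtain ⟨t, ht, hPt⟩ := Nat.exists_lt_and_not_succ h0 hPn
      exact ⟨t, ht.trans n.lt_succ_self, hPt⟩
section ZRM

variable {h p r m : ℕ}

lemma zrmCond.pow_dvd {c : Finset (Fin m) → ZMod (2 ^ h)} (hc : zrmCond h p r m c)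
    (S : Finset (Fin m)) : (2 : ZMod (2 ^ h)) ^ (#S - (r - p)) ∣ c S := by
  by_cases hSr : r < #S
  · rw [(hc S).1 hSr]
    exact dvd_zero _
  by_cases hSp : r - p < #S
  · obtain ⟨u, hu⟩ := (hc S).2 hSp (not_lt.1 hSr)
    exact ⟨u, hu⟩
  · rw [Nat.sub_eq_zero_of_le (not_lt.1 hSp), pow_zero]
    exact one_dvd _

open Classical in
theorem two_pow_le_wtL_of_mem_ZRM (hpr : p ≤ r) (hrm : r ≤ m) {v : Fin (2 ^ m) → ZMod (2 ^ h)}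
    (hv : v ∈ ZRM h p r m) (hv0 : v ≠ 0) : 2 ^ (m - r + p) ≤ wtL v := by
  obtain ⟨c, hc, rfl⟩ := hv
  have hc0 : c ≠ 0 := by
    rintro rfl
    exact hv0 (funext fun i => by simp [anfVec])
  have h2h : (2 : ZMod (2 ^ h)) ^ h = 0 := by exact_mod_cast ZMod.natCast_self (2 ^ h)
  obtain ⟨t, hth, hdvd, hndvd⟩ : ∃ t < h, (∀ S, (2 : ZMod (2 ^ h)) ^ t ∣ c S) ∧
      ¬ ∀ S, (2 : ZMod (2 ^ h)) ^ (t + 1) ∣ c S :=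
    Nat.exists_lt_and_not_succ (fun S => by simp) fun hall =>
      hc0 (funext fun S => zero_dvd_iff.1 (h2h ▸ hall S))
  set π := Ideal.Quotient.mk (Ideal.span {(2 : ZMod (2 ^ h)) ^ (t + 1)})
  have hπ : ∀ x, π x = 0 ↔ (2 : ZMod (2 ^ h)) ^ (t + 1) ∣ x := fun x => by
    rw [Ideal.Quotient.eq_zero_iff_mem, Ideal.mem_span_singleton]
  have hcount : 2 ^ (m - (r - p + t)) ≤ #{T | anfEval (π ∘ c) T ≠ 0} := by
    have hnz : ∃ S ⊆ univ, (π ∘ c) S ≠ 0 := by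
      push Not at hndvd
      obtain ⟨S, hS⟩ := hndvd
      exact ⟨S, subset_univ S, fun h0 => hS ((hπ _).1 h0)⟩
    simpa using two_pow_le_card_anfEval_ne_zero univ (r - p + t) (π ∘ c) hnz
      fun S _ hS => (hπ _).2 ((pow_dvd_pow 2 (by omega)).trans (hc.pow_dvd S))
  have hlee : ∀ T, anfEval (π ∘ c) T ≠ 0 → 2 ^ t ≤ leeNorm (anfEval c T) := by
    intro T hT
    refine le_leeNorm_of_dvd (pow_dvd_pow 2 hth.le) (by exact_mod_cast dvd_sum fun S _ => hdvd S) ?_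
    have hmap : anfEval (π ∘ c) T = π (anfEval c T) := (map_sum π c _).symm
    exact fun h0 => hT (by rw [hmap, h0, map_zero])
  calc 2 ^ (m - r + p) ≤ 2 ^ (m - (r - p + t) + t) := Nat.pow_le_pow_right two_pos (by omega)
    _ = 2 ^ (m - (r - p + t)) * 2 ^ t := pow_add _ _ _
    _ ≤ #{T | anfEval (π ∘ c) T ≠ 0} * 2 ^ t := Nat.mul_le_mul_right _ hcount
    _ ≤ ∑ T ∈ {T | anfEval (π ∘ c) T ≠ 0}, leeNorm (anfEval c T) := by
        simpa using card_nsmul_le_sum _ _ _ fun T hT => hlee T (mem_filter.1 hT).2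
    _ ≤ ∑ T, leeNorm (anfEval c T) := sum_le_sum_of_subset (subset_univ _)
    _ = wtL (anfVec h m c) := (wtL_anfVec c).symm

theorem exists_mem_ZRM_wtL_eq (hph : p < h) (hpr : p ≤ r) (hrm : r ≤ m) :
    ∃ v ∈ ZRM h p r m, wtL v = 2 ^ (m - r + p) := by
  obtain ⟨S₀, -, hS₀⟩ :=
    exists_subset_card_eq (s := (univ : Finset (Fin m))) (n := r) (by simpa)
  set c₀ : Finset (Fin m) → ZMod (2 ^ h) := Pi.single S₀ (2 ^ p)
  have hcond : zrmCond h p r m c₀ := by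
    intro S
    by_cases hS : S = S₀
    · subst hS
      refine ⟨fun hr => absurd hr (by omega), fun _ _ => ⟨1, ?_⟩⟩
      rw [hS₀, Nat.sub_sub_self hpr, mul_one]
      exact Pi.single_eq_same _ _
    · refine ⟨fun _ => Pi.single_eq_of_ne hS _, fun _ _ => ⟨0, ?_⟩⟩
      rw [mul_zero]
      exact Pi.single_eq_of_ne hS _
  have hlee : leeNorm ((2 : ZMod (2 ^ h)) ^ p) = 2 ^ p := by
    have : 2 * 2 ^ p ≤ 2 ^ h := by rw [← pow_succ']; exact Nat.pow_le_pow_right two_pos hph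
    exact_mod_cast leeNorm_natCast this
  have hsupersets : #{T : Finset (Fin m) | S₀ ⊆ T} = 2 ^ (m - r) := by
    have hIcc := card_Icc_finset (subset_univ S₀)
    rw [card_univ, Fintype.card_fin, hS₀] at hIcc
    rw [← hIcc]
    congr 1
    ext T
    simp
  refine ⟨anfVec h m c₀, ⟨c₀, hcond, rfl⟩, ?_⟩
  simp only [wtL_anfVec, c₀, anfEval_single, apply_ite leeNorm, hlee, leeNorm_zero]
  rw [sum_ite, sum_const_zero, add_zero, sum_const, hsupersets, smul_eq_mul, ← pow_add]

end ZRM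

/-- The minimum Lee distance of the linear code `ZRM_{2^h}^p(r,m)` equals `2^{m-r+p}`. -/
theorem stmt_7 (h p r m : ℕ) (hph : p < h) (hpr : p ≤ r) (hrm : r ≤ m) :
    (∀ v ∈ ZRM h p r m, v ≠ 0 → 2 ^ (m - r + p) ≤ wtL v) ∧
    (∃ v ∈ ZRM h p r m, v ≠ 0 ∧ wtL v = 2 ^ (m - r + p)) := by
  refine ⟨fun v hv hv0 => two_pow_le_wtL_of_mem_ZRM hpr hrm hv hv0, ?_⟩
  obtain ⟨v, hv, hwt⟩ := exists_mem_ZRM_wtL_eq hph hpr hrm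
  refine ⟨v, hv, ?_, hwt⟩
  rintro rfl
  rw [wtL_zero] at hwt
  exact pow_ne_zero _ two_ne_zero hwt.symm
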